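/- A symmetric OMZD(n) exists if and only if n is even and n ≠ 4. -/

import Mathlib

/-!
Evenness: if `A² = c I` with `c = r² > 0` and `tr A = 0`, then `P = (I + A / r) / 2` is idempotent, so
`n / 2 = tr P = rank P` is an integer. Order four: three of the orthogonality relations between the rows
of a symmetric zero-diagonal `4 × 4` matrix combine to `2 a₀₃ a₁₂ a₁₃ a₂₃ = 0`. Construction for
`n = 2m`, `m ≠ 2`: with `X = J - I` and `Y = X - (m - 2) I`, the matrix `[[X, Y], [Y, -X]]` is symmetric,
squares to `((m - 1)² + 1) I`, and vanishes exactly on its diagonal.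
-/

open Matrix

/-- An `n × n` real matrix is an OMZD: `A * Aᵀ = c • I` for some `c > 0`,
zero diagonal, and all off-diagonal entries nonzero. -/
def IsOMZD {n : ℕ} (A : Matrix (Fin n) (Fin n) ℝ) : Prop :=
  (∃ c : ℝ, 0 < c ∧ A * Aᵀ = c • (1 : Matrix (Fin n) (Fin n) ℝ)) ∧
  (∀ i, A i i = 0) ∧ (∀ i j, i ≠ j → A i j ≠ 0)

namespace Matrix

variable {ι : Type*} [Fintype ι] [DecidableEq ι]

theorem trace_eq_rank_of_isIdempotentElem {K : Type*} [Field K] {P : Matrix ι ι K}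
    (hP : IsIdempotentElem P) : P.trace = P.rank := by
  have hlin : IsIdempotentElem (toLin' P) := hP.map toLinAlgEquiv'
  rw [← trace_toLin'_eq, (LinearMap.IsIdempotentElem.isProj_range _ hlin).trace, rank]
  rfl

theorem even_card_of_mul_self_eq_sq_smul_one {K : Type*} [Field K] [CharZero K]
    {A : Matrix ι ι K} {r : K} (hr : r ≠ 0) (hA : A * A = r ^ 2 • 1) (htr : A.trace = 0) :
    Even (Fintype.card ι) := by
  set P : Matrix ι ι K := (2 : K)⁻¹ • (1 + r⁻¹ • A)
  have hP : IsIdempotentElem P := by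
    have hr2 : r⁻¹ * r⁻¹ * r ^ 2 = 1 := by field_simp
    rw [IsIdempotentElem]
    simp only [P, smul_mul_smul_comm, add_mul, mul_add, one_mul, mul_one, hA, smul_smul, hr2]
    module
  have htrP : P.trace = (2 : K)⁻¹ * Fintype.card ι := by
    simp [P, trace_add, htr]
  have hcard : (Fintype.card ι : K) = P.rank + P.rank := by
    rw [← trace_eq_rank_of_isIdempotentElem hP, htrP]
    ring
  exact ⟨P.rank, mod_cast hcard⟩

theorem fromBlocks_mul_self_eq_smul_one {R : Type*} [CommRing R] {X Y : Matrix ι ι R}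
    (hXY : Commute X Y) {k : R} (hk : X * X + Y * Y = k • 1) :
    fromBlocks X Y Y (-X) * fromBlocks X Y Y (-X) = k • 1 := by
  rw [fromBlocks_multiply, ← fromBlocks_one, fromBlocks_smul, mul_neg, neg_mul, neg_mul_neg,
    hXY.eq, add_neg_cancel, add_comm (Y * Y), hk, smul_zero]

end Matrix

theorem exists_ne_apply_eq_zero_of_fin_four {A : Matrix (Fin 4) (Fin 4) ℝ} (hsym : Aᵀ = A)
    (hdiag : ∀ i, A i i = 0) (horth : ∀ i j, i ≠ j → (A * A) i j = 0) :
    ∃ i j, i ≠ j ∧ A i j = 0 := by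
  have hA : ∀ i j, A j i = A i j := fun i j => congrFun (congrFun hsym i) j
  have h01 := horth 0 1 (by decide)
  have h12 := horth 1 2 (by decide)
  have h13 := horth 1 3 (by decide)
  simp only [mul_apply, Fin.sum_univ_four, hdiag, hA 0 1, hA 1 2, hA 1 3, hA 2 3] at h01 h12 h13
  have hprod : A 0 3 * A 1 2 * A 1 3 * A 2 3 = 0 := by
    linear_combination (1 / 2 : ℝ) *
      (A 0 3 * A 1 2 * h12 + A 0 3 * A 1 3 * h13 - A 0 1 * A 0 3 * h01)
  simp only [mul_eq_zero] at hprod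
  rcases hprod with ((h | h) | h) | h
  exacts [⟨0, 3, by decide, h⟩, ⟨1, 2, by decide, h⟩, ⟨1, 3, by decide, h⟩, ⟨2, 3, by decide, h⟩]

section Construction

variable (m : ℕ)

def offDiagOnes : Matrix (Fin m) (Fin m) ℝ := of fun i j => if i = j then 0 else 1

theorem offDiagOnes_transpose : (offDiagOnes m)ᵀ = offDiagOnes m := by
  ext i j
  simp [offDiagOnes, eq_comm]

theorem offDiagOnes_mul_self :
    offDiagOnes m * offDiagOnes m = ((m : ℝ) - 2) • offDiagOnes m + ((m : ℝ) - 1) • 1 := by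
  set J : Matrix (Fin m) (Fin m) ℝ := of fun _ _ => 1
  have hJ : J * J = (m : ℝ) • J := by
    ext
    simp [J, mul_apply]
  have hX : offDiagOnes m = J - 1 := by
    ext i j
    by_cases h : i = j <;> simp [offDiagOnes, J, h, one_apply]
  simp only [hX, sub_mul, mul_sub, one_mul, mul_one, hJ]
  module

def omzdBlocks : Matrix (Fin m ⊕ Fin m) (Fin m ⊕ Fin m) ℝ :=
  fromBlocks (offDiagOnes m) (offDiagOnes m - ((m : ℝ) - 2) • 1)
    (offDiagOnes m - ((m : ℝ) - 2) • 1) (-offDiagOnes m)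

theorem omzdBlocks_transpose : (omzdBlocks m)ᵀ = omzdBlocks m := by
  simp [omzdBlocks, fromBlocks_transpose, offDiagOnes_transpose]

theorem omzdBlocks_mul_self : omzdBlocks m * omzdBlocks m = (((m : ℝ) - 1) ^ 2 + 1) • 1 := by
  refine fromBlocks_mul_self_eq_smul_one
    ((Commute.refl _).sub_right ((Commute.one_right _).smul_right _)) ?_
  simp only [sub_mul, mul_sub, smul_mul_assoc, mul_smul_comm, one_mul, mul_one, smul_sub,
    smul_smul, offDiagOnes_mul_self]
  module

theorem omzdBlocks_apply_eq_zero_iff (hm : m ≠ 2) (p q : Fin m ⊕ Fin m) :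
    omzdBlocks m p q = 0 ↔ p = q := by
  have hm' : (2 : ℝ) - m ≠ 0 := sub_ne_zero.mpr (mod_cast hm.symm)
  rcases p with i | i <;> rcases q with j | j <;> by_cases h : i = j <;>
    simp [omzdBlocks, offDiagOnes, h, one_apply, hm']

end Construction

theorem isOMZD_reindex {ι : Type*} [Fintype ι] [DecidableEq ι] {n : ℕ} (e : ι ≃ Fin n)
    {B : Matrix ι ι ℝ} {c : ℝ} (hc : 0 < c) (hB : B * Bᵀ = c • 1)
    (hzero : ∀ p q, B p q = 0 ↔ p = q) : IsOMZD (reindex e e B) := by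
  refine ⟨⟨c, hc, ?_⟩, fun i => (hzero _ _).2 rfl, fun i j hij h => hij ?_⟩
  · rw [transpose_reindex, ← coe_reindexAlgEquiv ℝ ℝ, ← map_mul, hB, map_smul, map_one]
  · simpa using (hzero _ _).1 h

theorem symmetric_omzd_exists_iff (n : ℕ) :
    (∃ A : Matrix (Fin n) (Fin n) ℝ, Aᵀ = A ∧ IsOMZD A) ↔ (Even n ∧ n ≠ 4) := by
  constructor
  · rintro ⟨A, hsym, ⟨c, hc, hmul⟩, hdiag, hoff⟩
    rw [hsym] at hmul
    refine ⟨?_, ?_⟩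
    · have hr : Real.sqrt c ^ 2 = c := Real.sq_sqrt hc.le
      have htr : A.trace = 0 := by simp [trace, hdiag]
      simpa using even_card_of_mul_self_eq_sq_smul_one (Real.sqrt_pos.2 hc).ne' (by rwa [hr]) htr
    · rintro rfl
      obtain ⟨i, j, hij, h⟩ := exists_ne_apply_eq_zero_of_fin_four hsym hdiag fun i j hij => by
        simp [hmul, one_apply_ne hij]
      exact hoff i j hij h
  · rintro ⟨⟨m, rfl⟩, h4⟩
    refine ⟨reindex finSumFinEquiv finSumFinEquiv (omzdBlocks m), ?_, ?_⟩
    · rw [transpose_reindex, omzdBlocks_transpose]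
    · have hm : m ≠ 2 := by omega
      refine isOMZD_reindex _ (c := ((m : ℝ) - 1) ^ 2 + 1) (by positivity) ?_
        (omzdBlocks_apply_eq_zero_iff m hm)
      rw [omzdBlocks_transpose, omzdBlocks_mul_self]
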